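/- arXiv:2307.13795 — 7 statements merged into one kernel-verified Lean document; each statement's English description precedes it below -/
import Mathlib

section
/- The pointwise join ι ⊔ ι' on interrupt handler annotations, defined coinductively by (ι ⊔ ι')(op) = (o'' ⊔ o''', ι'' ⊔ ι''') when both ι(op) = (o'', ι'') and ι'(op) = (o''', ι'''), by (ι ⊔ ι')(op) = ι(op) when ι'(op) = ⊥, by (ι ⊔ ι')(op) = ι'(op) when ι(op) = ⊥, and ⊥ when both are ⊥, is a least upper bound of ι and ι' with respect to ⊑_I. -/
/-- Interrupt handler annotations: elements of the greatest fixed point of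
`Φ(X) = Op ⇒ (O × X)_⊥` where `O = Set Op`, encoded as prefix-closed partial
maps from nonempty paths (lists of operation names) to signal annotations. -/
structure IAnn (Op : Type) : Type where
  val : List Op → Option (Set Op)
  nil_none : val [] = none
  prefix_closed : ∀ l l', l ≠ [] → (val (l ++ l')).isSome → (val l).isSome

namespace IAnn

variable {Op : Type}

/-- The coinductive order `⊑_I` on interrupt handler annotations. -/
def le (ι ι' : IAnn Op) : Prop :=
  ∀ l o, ι.val l = some o → ∃ o', ι'.val l = some o' ∧ o ⊆ o'

/-- The least annotation (everywhere ⊥). -/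
def bot (Op : Type) : IAnn Op :=
  ⟨fun _ => none, rfl, fun _ _ _ h => by simp at h⟩

/-- Join on `(Set Op)_⊥`. -/
def ojoin (a b : Option (Set Op)) : Option (Set Op) :=
  match a, b with
  | some x, some y => some (x ∪ y)
  | some x, none => some x
  | none, y => y

lemma ojoin_isSome (a b : Option (Set Op)) :
    (ojoin a b).isSome ↔ a.isSome ∨ b.isSome := by
  cases a <;> cases b <;> simp [ojoin]

/-- The pointwise join `ι ⊔ ι'` of interrupt handler annotations. -/
def join (ι ι' : IAnn Op) : IAnn Op where
  val l := ojoin (ι.val l) (ι'.val l)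
  nil_none := by show ojoin (ι.val []) (ι'.val []) = none; rw [ι.nil_none, ι'.nil_none]; rfl
  prefix_closed := fun l l' hl h => by
    rcases (ojoin_isSome _ _).mp h with h | h
    · exact (ojoin_isSome _ _).mpr (Or.inl (ι.prefix_closed l l' hl h))
    · exact (ojoin_isSome _ _).mpr (Or.inr (ι'.prefix_closed l l' hl h))

/-- The subtree of `ι` at `op`, i.e. the second component of `ι(op)` when defined. -/
def subtree (ι : IAnn Op) (op : Op) : IAnn Op where
  val l := match l with
    | [] => none
    | a :: t => ι.val (op :: a :: t)
  nil_none := rfl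
  prefix_closed := fun l l' hl h => by
    match l with
    | [] => exact absurd rfl hl
    | a :: t =>
      simp only [List.cons_append] at h
      exact ι.prefix_closed (op :: a :: t) l' (by simp) h

variable [DecidableEq Op]

/-- `ι[op ↦ ⊥]`: set `ι` to be undefined at `op`. -/
def update (ι : IAnn Op) (op : Op) : IAnn Op where
  val l := match l with
    | [] => none
    | op' :: rest => if op' = op then none else ι.val (op' :: rest)
  nil_none := rfl
  prefix_closed := fun l l' hl h => by
    match l with
    | [] => exact absurd rfl hl
    | a :: t =>
      simp only [List.cons_append] at h
      by_cases hao : a = op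
      · simp [hao] at h
      · simp only [if_neg hao] at h ⊢
        exact ι.prefix_closed (a :: t) l' (by simp) h

/-- The singleton annotation `{ op ↦ (o, ι) }`. -/
def single (op : Op) (o : Set Op) (ι : IAnn Op) : IAnn Op where
  val l := match l with
    | [] => none
    | op' :: rest =>
        if op' = op then (if rest = [] then some o else ι.val rest) else none
  nil_none := rfl
  prefix_closed := fun l l' hl h => by
    match l with
    | [] => exact absurd rfl hl
    | a :: t =>
      simp only [List.cons_append] at h
      by_cases hao : a = op
      · simp only [if_pos hao] at h ⊢
        match t with
        | [] => simp
        | b :: u =>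
          simp only [List.cons_append] at h ⊢
          rw [if_neg (by simp)] at h
          rw [if_neg (by simp)]
          exact ι.prefix_closed (b :: u) l' (by simp) h
      · simp [hao] at h

/-- The action `op ↓ (o, ι)` of an interrupt on an effect annotation. -/
def act (op : Op) (p : Set Op × IAnn Op) : Set Op × IAnn Op :=
  match p.2.val [op] with
  | some o' => (p.1 ∪ o', join (update p.2 op) (p.2.subtree op))
  | none => p

/-- The product order `⊑_{O×I}` on effect annotations. -/
def leOI (p q : Set Op × IAnn Op) : Prop := p.1 ⊆ q.1 ∧ le p.2 q.2

/-- The action `ops ↓↓ (o, ι)` of a list of interrupts on an effect annotation. -/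
def actList : List Op → Set Op × IAnn Op → Set Op × IAnn Op
  | [], p => p
  | op :: ops, p => act op (actList ops p)

end IAnn

/-- The pointwise join `ι ⊔ ι'` of interrupt handler annotations is a least
upper bound of `ι` and `ι'` with respect to `⊑_I`. -/
theorem IAnn_join_isLUB (Op : Type) (ι ι' : IAnn Op) :
    IAnn.le ι (IAnn.join ι ι') ∧
    IAnn.le ι' (IAnn.join ι ι') ∧
    ∀ u : IAnn Op, IAnn.le ι u → IAnn.le ι' u → IAnn.le (IAnn.join ι ι') u := by
  refine ⟨?_, ?_, ?_⟩
  · intro l o h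
    cases h' : ι'.val l with
    | none => exact ⟨o, by simp [IAnn.join, IAnn.ojoin, h, h'], subset_rfl⟩
    | some o' => exact ⟨o ∪ o', by simp [IAnn.join, IAnn.ojoin, h, h'], Set.subset_union_left⟩
  · intro l o h
    cases h' : ι.val l with
    | none => exact ⟨o, by simp [IAnn.join, IAnn.ojoin, h, h'], subset_rfl⟩
    | some o' => exact ⟨o' ∪ o, by simp [IAnn.join, IAnn.ojoin, h, h'], Set.subset_union_right⟩
  · intro u h1 h2 l o h
    simp only [IAnn.join, IAnn.ojoin] at h
    cases h' : ι.val l with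
    | none =>
      rw [h'] at h
      cases h'' : ι'.val l with
      | none => rw [h''] at h; exact absurd h (by simp)
      | some o2 => rw [h''] at h; cases h; exact h2 l o h''
    | some o1 =>
      rw [h'] at h
      cases h'' : ι'.val l with
      | none =>
        rw [h''] at h; cases h
        exact h1 l o h'
      | some o2 =>
        rw [h''] at h; cases h
        obtain ⟨a, ha, hsa⟩ := h1 l o1 h'
        obtain ⟨b, hb, hsb⟩ := h2 l o2 h''
        rw [ha] at hb; cases hb
        exact ⟨a, ha, Set.union_subset hsa hsb⟩
end

section
/- For any list of interrupt names ops, any interrupt name op, and any effect annotation (o, ι), it holds that π₁(ops↓↓(o, ι)) ⊑_O π₁(ops↓↓(op↓(o, ι))), where ops↓↓ denotes the action of the list ops applied via [] ↓↓ (o,ι) = (o,ι) and (op :: ops) ↓↓ (o,ι) = op↓(ops↓↓(o,ι)). -/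
set_option linter.unusedSectionVars false

namespace IAnn

variable {Op : Type} [DecidableEq Op]

lemma ojoin_left' (x : Set Op) (b : Option (Set Op)) :
    ∃ z, ojoin (some x) b = some z ∧ x ⊆ z := by
  cases b with
  | none => exact ⟨x, rfl, subset_rfl⟩
  | some y => exact ⟨x ∪ y, rfl, Set.subset_union_left⟩

lemma ojoin_right' (y : Set Op) (b : Option (Set Op)) :
    ∃ z, ojoin b (some y) = some z ∧ y ⊆ z := by
  cases b with
  | none => exact ⟨y, rfl, subset_rfl⟩
  | some x => exact ⟨x ∪ y, rfl, Set.subset_union_right⟩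

lemma act_fst (a : Op) (q : Set Op × IAnn Op) : q.1 ⊆ (act a q).1 := by
  rcases h : q.2.val [a] with _ | o'
  · simp [act, h]
  · simp [act, h]

lemma actList_fst (ops : List Op) (q : Set Op × IAnn Op) :
    q.1 ⊆ (actList ops q).1 := by
  induction ops with
  | nil => exact subset_rfl
  | cons a ops ih => exact ih.trans (act_fst a _)

/-- act on a path with head ≠ a preserves the entry (up to enlarging). -/
lemma act_val_ne (a b : Op) (rest : List Op) (q : Set Op × IAnn Op) (hba : b ≠ a)
    (s' : Set Op) (h : q.2.val (b :: rest) = some s') :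
    ∃ s'', (act a q).2.val (b :: rest) = some s'' ∧ s' ⊆ s'' := by
  rcases hq : q.2.val [a] with _ | o'
  · exact ⟨s', by simp [act, hq, h], subset_rfl⟩
  · obtain ⟨z, hz, hsub⟩ := ojoin_left' s' ((q.2.subtree a).val (b :: rest))
    refine ⟨z, ?_, hsub⟩
    have hact : act a q = (q.1 ∪ o', join (update q.2 a) (q.2.subtree a)) := by
      simp [act, hq]
    rw [hact]
    show ojoin ((update q.2 a).val (b :: rest)) ((q.2.subtree a).val (b :: rest)) = some z
    have : (update q.2 a).val (b :: rest) = some s' := by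
      show (if b = a then none else q.2.val (b :: rest)) = some s'
      rw [if_neg hba, h]
    rw [this]
    exact hz

/-- consuming the head `a` of a path collects it into the first component. -/
lemma act_val_head (a : Op) (q : Set Op × IAnn Op) (s' : Set Op)
    (h : q.2.val [a] = some s') : s' ⊆ (act a q).1 := by
  simp [act, h]

/-- act on a longer path with head `a` shifts the entry up one level. -/
lemma act_val_cons (a : Op) (rest : List Op) (q : Set Op × IAnn Op)
    (hrest : rest ≠ []) (s' : Set Op) (h : q.2.val (a :: rest) = some s') :
    ∃ s'', (act a q).2.val rest = some s'' ∧ s' ⊆ s'' := by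
  have hsome : (q.2.val [a]).isSome := by
    apply q.2.prefix_closed [a] rest (by simp)
    simp only [List.singleton_append, h, Option.isSome_some]
  obtain ⟨o', hq⟩ := Option.isSome_iff_exists.mp hsome
  obtain ⟨c, u, rfl⟩ : ∃ c u, rest = c :: u := by
    cases rest with
    | nil => exact absurd rfl hrest
    | cons c u => exact ⟨c, u, rfl⟩
  obtain ⟨z, hz, hsub⟩ := ojoin_right' s' ((update q.2 a).val (c :: u))
  refine ⟨z, ?_, hsub⟩
  have hact : act a q = (q.1 ∪ o', join (update q.2 a) (q.2.subtree a)) := by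
    simp [act, hq]
  rw [hact]
  show ojoin ((update q.2 a).val (c :: u)) ((q.2.subtree a).val (c :: u)) = some z
  have hsv : (q.2.subtree a).val (c :: u) = some s' := h
  rw [hsv]
  exact hz

/-- one act step on a surviving-suffix configuration. -/
lemma act_step (a : Op) (q : Set Op × IAnn Op) (l₂ m m₂ : List Op) (s s' : Set Op)
    (hm_eq : m = l₂ ++ m₂) (hm₂ : m₂ ≠ []) (hq : q.2.val m₂ = some s') (hss : s ⊆ s') :
    (∃ l₃ m₃ s'', m = l₃ ++ m₃ ∧ m₃ ≠ [] ∧ (act a q).2.val m₃ = some s'' ∧ s ⊆ s'') ∨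
      s ⊆ (act a q).1 := by
  obtain ⟨b, rest, rfl⟩ : ∃ b rest, m₂ = b :: rest := by
    cases m₂ with
    | nil => exact absurd rfl hm₂
    | cons b rest => exact ⟨b, rest, rfl⟩
  by_cases hba : b = a
  · subst hba
    rcases eq_or_ne rest [] with rfl | hrest
    · exact Or.inr (hss.trans (act_val_head b q s' hq))
    · obtain ⟨s'', h'', hsub⟩ := act_val_cons b rest q hrest s' hq
      exact Or.inl ⟨l₂ ++ [b], rest, s'', by simp [hm_eq], hrest, h'', hss.trans hsub⟩
  · obtain ⟨s'', h'', hsub⟩ := act_val_ne a b rest q hba s' hq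
    exact Or.inl ⟨l₂, b :: rest, s'', hm_eq, by simp, h'', hss.trans hsub⟩

/-- Key invariant: if the reversed planned prefix `l` is a sublist of `ops`,
then the entry at `l ++ m` survives at some suffix of `m` or is collected. -/
lemma actList_val_fwd (ops : List Op) :
    ∀ (p : Set Op × IAnn Op) (l m : List Op) (s : Set Op),
      l.reverse.Sublist ops → m ≠ [] → p.2.val (l ++ m) = some s →
      (∃ l₂ m₂ s', m = l₂ ++ m₂ ∧ m₂ ≠ [] ∧ (actList ops p).2.val m₂ = some s' ∧ s ⊆ s') ∨
        s ⊆ (actList ops p).1 := by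
  induction ops with
  | nil =>
    intro p l m s hl hm h
    have : l = [] := by simpa using (List.reverse_eq_nil_iff.mp (List.sublist_nil.mp hl))
    subst this
    exact Or.inl ⟨[], m, s, rfl, hm, h, subset_rfl⟩
  | cons a ops ih =>
    intro p l m s hl hm h
    rcases List.sublist_cons_iff.mp hl with hl' | ⟨t, ht, hts⟩
    · rcases ih p l m s hl' hm h with ⟨l₂, m₂, s', hm_eq, hm₂, hq, hss⟩ | hcol
      · exact act_step a (actList ops p) l₂ m m₂ s s' hm_eq hm₂ hq hss
      · exact Or.inr (hcol.trans (act_fst a _))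
    · have hlform : l = t.reverse ++ [a] := by
        have := congrArg List.reverse ht
        simpa using this
      have h' : p.2.val (t.reverse ++ (a :: m)) = some s := by
        rw [hlform] at h; simpa using h
      rcases ih p t.reverse (a :: m) s (by simpa using hts) (by simp) h' with
        ⟨l₂, m₂, s', hm_eq, hm₂, hq, hss⟩ | hcol
      · cases l₂ with
        | nil =>
          simp only [List.nil_append] at hm_eq
          subst hm_eq
          rcases eq_or_ne m [] with rfl | hm'
          · exact Or.inr (hss.trans (act_val_head a (actList ops p) s' hq))
          · obtain ⟨s'', h'', hsub⟩ := act_val_cons a m (actList ops p) hm' s' hq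
            exact Or.inl ⟨[], m, s'', rfl, hm', h'', hss.trans hsub⟩
        | cons a' l₂' =>
          have ha' : a' = a := by
            have := congrArg (fun l => l.head? ) hm_eq
            simpa using this.symm
          subst ha'
          have hm_eq' : m = l₂' ++ m₂ := by
            simpa using hm_eq
          exact act_step a' (actList ops p) l₂' m m₂ s s' hm_eq' hm₂ hq hss
      · exact Or.inr (hcol.trans (act_fst a _))

/-- If the whole reversed path is a sublist of `ops`, the signal is collected. -/
lemma actList_collects (ops : List Op) :
    ∀ (p : Set Op × IAnn Op) (l : List Op) (s : Set Op),
      l.reverse.Sublist ops → p.2.val l = some s → s ⊆ (actList ops p).1 := by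
  induction ops with
  | nil =>
    intro p l s hl h
    have : l = [] := by simpa using (List.reverse_eq_nil_iff.mp (List.sublist_nil.mp hl))
    subst this
    rw [p.2.nil_none] at h; cases h
  | cons a ops ih =>
    intro p l s hl h
    rcases List.sublist_cons_iff.mp hl with hl' | ⟨t, ht, hts⟩
    · exact (ih p l s hl' h).trans (act_fst a _)
    · have hlform : l = t.reverse ++ [a] := by
        have := congrArg List.reverse ht
        simpa using this
      have h' : p.2.val (t.reverse ++ [a]) = some s := by rw [hlform] at h; exact h
      rcases actList_val_fwd ops p t.reverse [a] s (by simpa using hts) (by simp) h' with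
        ⟨l₂, m₂, s', hm_eq, hm₂, hq, hss⟩ | hcol
      · have hl₂ : l₂ = [] ∧ m₂ = [a] := by
          cases l₂ with
          | nil => exact ⟨rfl, by simpa using hm_eq.symm⟩
          | cons x xs =>
            exfalso
            have : [a] = x :: (xs ++ m₂) := by simpa using hm_eq
            have hxs : xs ++ m₂ = [] := by
              have := congrArg List.tail this
              simpa using this.symm
            exact hm₂ (List.append_eq_nil_iff.mp hxs).2
        rw [hl₂.2] at hq
        exact hss.trans (act_val_head a (actList ops p) s' hq)
      · exact hcol.trans (act_fst a _)

/-- Backwards: every collected signal comes from an entry along a sublist path. -/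
lemma actList_val_back (ops : List Op) :
    ∀ (p : Set Op × IAnn Op) (m : List Op) (s : Set Op) (x : Op),
      m ≠ [] → (actList ops p).2.val m = some s → x ∈ s →
      ∃ l s₀, l.reverse.Sublist ops ∧ p.2.val (l ++ m) = some s₀ ∧ x ∈ s₀ := by
  induction ops with
  | nil =>
    intro p m s x _ h hx
    exact ⟨[], s, List.nil_sublist _, h, hx⟩
  | cons a ops ih =>
    intro p m s x hm h hx
    have h2 : (act a (actList ops p)).2.val m = some s := h
    rcases hq : (actList ops p).2.val [a] with _ | o'
    · have h' : (actList ops p).2.val m = some s := by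
        rw [show act a (actList ops p) = actList ops p by simp [act, hq]] at h2
        exact h2
      obtain ⟨l, s₀, hsub, hval, hx₀⟩ := ih p m s x hm h' hx
      exact ⟨l, s₀, hsub.cons a, hval, hx₀⟩
    · obtain ⟨b, rest, rfl⟩ : ∃ b rest, m = b :: rest := by
        cases m with
        | nil => exact absurd rfl hm
        | cons b rest => exact ⟨b, rest, rfl⟩
      have h' : ojoin ((update (actList ops p).2 a).val (b :: rest))
          (((actList ops p).2.subtree a).val (b :: rest)) = some s := by
        rw [show act a (actList ops p)
            = ((actList ops p).1 ∪ o',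
               join (update (actList ops p).2 a) ((actList ops p).2.subtree a))
            by simp [act, hq]] at h2
        exact h2
      have hsx : (∃ su, (update (actList ops p).2 a).val (b :: rest) = some su ∧ x ∈ su) ∨
          (∃ sv, ((actList ops p).2.subtree a).val (b :: rest) = some sv ∧ x ∈ sv) := by
        rcases hu : (update (actList ops p).2 a).val (b :: rest) with _ | su <;>
          rcases hv : ((actList ops p).2.subtree a).val (b :: rest) with _ | sv <;>
          rw [hu, hv] at h' <;> simp [ojoin] at h'
        · exact Or.inr ⟨sv, rfl, h' ▸ hx⟩
        · exact Or.inl ⟨su, rfl, h' ▸ hx⟩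
        · rcases (h' ▸ hx : x ∈ su ∪ sv) with hxx | hxx
          · exact Or.inl ⟨su, rfl, hxx⟩
          · exact Or.inr ⟨sv, rfl, hxx⟩
      rcases hsx with ⟨su, hu, hxu⟩ | ⟨sv, hv, hxv⟩
      · have hba : ¬ b = a := by
          intro hba
          rw [show (update (actList ops p).2 a).val (b :: rest)
              = if b = a then none else (actList ops p).2.val (b :: rest) from rfl,
            if_pos hba] at hu
          cases hu
        have hu' : (actList ops p).2.val (b :: rest) = some su := by
          rw [show (update (actList ops p).2 a).val (b :: rest)
              = if b = a then none else (actList ops p).2.val (b :: rest) from rfl,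
            if_neg hba] at hu
          exact hu
        obtain ⟨l, s₀, hsub, hval, hx₀⟩ := ih p (b :: rest) su x (by simp) hu' hxu
        exact ⟨l, s₀, hsub.cons a, hval, hx₀⟩
      · have hv' : (actList ops p).2.val (a :: b :: rest) = some sv := hv
        obtain ⟨l, s₀, hsub, hval, hx₀⟩ := ih p (a :: b :: rest) sv x (by simp) hv' hxv
        refine ⟨l ++ [a], s₀, ?_, by simpa using hval, hx₀⟩
        simpa using hsub.cons₂ a
  
/-- Backwards for the first component. -/
lemma actList_fst_back (ops : List Op) :
    ∀ (p : Set Op × IAnn Op) (x : Op), x ∈ (actList ops p).1 →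
      x ∈ p.1 ∨ ∃ l s, l.reverse.Sublist ops ∧ p.2.val l = some s ∧ x ∈ s := by
  induction ops with
  | nil => intro p x hx; exact Or.inl hx
  | cons a ops ih =>
    intro p x hx
    have weaken : x ∈ (actList ops p).1 →
        x ∈ p.1 ∨ ∃ l s, l.reverse.Sublist (a :: ops) ∧ p.2.val l = some s ∧ x ∈ s := by
      intro hx'
      rcases ih p x hx' with h | ⟨l, s, hsub, hval, hxs⟩
      · exact Or.inl h
      · exact Or.inr ⟨l, s, hsub.cons a, hval, hxs⟩
    have hx2 : x ∈ (act a (actList ops p)).1 := hx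
    rcases hq : (actList ops p).2.val [a] with _ | o'
    · have : x ∈ (actList ops p).1 := by
        rw [show act a (actList ops p) = actList ops p by simp [act, hq]] at hx2
        exact hx2
      exact weaken this
    · have hx' : x ∈ (actList ops p).1 ∪ o' := by
        rw [show act a (actList ops p)
            = ((actList ops p).1 ∪ o',
               join (update (actList ops p).2 a) ((actList ops p).2.subtree a))
            by simp [act, hq]] at hx2
        exact hx2
      rcases hx' with hx' | hx'
      · exact weaken hx'
      · obtain ⟨l, s₀, hsub, hval, hx₀⟩ :=
          actList_val_back ops p [a] o' x (by simp) hq hx'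
        exact Or.inr ⟨l ++ [a], s₀, by simpa using hsub.cons₂ a, hval, hx₀⟩

end IAnn


/-- `π₁(ops ↓↓ (o, ι)) ⊑_O π₁(ops ↓↓ (op ↓ (o, ι)))` for any list `ops` of
interrupt names, any `op`, and any effect annotation `(o, ι)`. -/
theorem actList_signals_le (Op : Type) [DecidableEq Op]
    (ops : List Op) (op : Op) (o : Set Op) (ι : IAnn Op) :
    (IAnn.actList ops (o, ι)).1 ⊆ (IAnn.actList ops (IAnn.act op (o, ι))).1 := by
  intro x hx
  rcases IAnn.actList_fst_back ops (o, ι) x hx with hxo | ⟨l, s, hsub, hval, hxs⟩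
  · -- x ∈ o ⊆ (act op (o, ι)).1 ⊆ result
    exact IAnn.actList_fst ops _ (IAnn.act_fst op (o, ι) hxo)
  · rcases hq : ι.val [op] with _ | o'
    · rw [show IAnn.act op (o, ι) = (o, ι) by simp [IAnn.act, hq]]
      exact IAnn.actList_collects ops (o, ι) l s hsub hval hxs
    · have hact : IAnn.act op (o, ι) = (o ∪ o', IAnn.join (IAnn.update ι op) (ι.subtree op)) := by
        simp [IAnn.act, hq]
      obtain ⟨b, rest, rfl⟩ : ∃ b rest, l = b :: rest := by
        cases l with
        | nil => rw [ι.nil_none] at hval; cases hval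
        | cons b rest => exact ⟨b, rest, rfl⟩
      by_cases hba : b = op
      · subst hba
        rcases eq_or_ne rest [] with rfl | hrest
        · -- l = [op]: s = o' ⊆ first component
          rw [hq] at hval
          have hso : s = o' := by cases hval; rfl
          apply IAnn.actList_fst ops _
          rw [hact]
          exact Or.inr (hso ▸ hxs)
        · -- l = op :: rest, rest ≠ []: entry survives at rest in the new tree
          obtain ⟨z, hz, hsub'⟩ := IAnn.ojoin_right' s ((IAnn.update ι b).val rest)
          have hval' : (IAnn.act b (o, ι)).2.val rest = some z := by
            rw [hact]
            show IAnn.ojoin ((IAnn.update ι b).val rest) ((ι.subtree b).val rest) = some z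
            obtain ⟨c, u, rfl⟩ : ∃ c u, rest = c :: u := by
              cases rest with
              | nil => exact absurd rfl hrest
              | cons c u => exact ⟨c, u, rfl⟩
            have : (ι.subtree b).val (c :: u) = some s := hval
            rw [this]
            exact hz
          have hsubrest : rest.reverse.Sublist ops := by
            have h1 : rest.reverse.Sublist (rest.reverse ++ [b]) :=
              List.sublist_append_left _ _
            have h2 : (b :: rest).reverse = rest.reverse ++ [b] := by simp
            exact (h1.trans (h2 ▸ hsub))
          exact IAnn.actList_collects ops _ rest z hsubrest hval' (hsub' hxs)
      · -- head ≠ op: entry survives at the same path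
        obtain ⟨z, hz, hsub'⟩ := IAnn.ojoin_left' s ((ι.subtree op).val (b :: rest))
        have hval' : (IAnn.act op (o, ι)).2.val (b :: rest) = some z := by
          rw [hact]
          show IAnn.ojoin ((IAnn.update ι op).val (b :: rest)) ((ι.subtree op).val (b :: rest)) = some z
          have : (IAnn.update ι op).val (b :: rest) = some s := by
            show (if b = op then none else ι.val (b :: rest)) = some s
            rw [if_neg hba, hval]
          rw [this]
          exact hz
        exact IAnn.actList_collects ops _ (b :: rest) z hsub hval' (hsub' hxs)
end

section
/- The interrupt action is monotone: if (o, ι) ⊑_{O×I} (o', ι'), then op↓(o, ι) ⊑_{O×I} op↓(o', ι') for every interrupt name op. -/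
namespace IAnn
variable {Op : Type}

def ole (a b : Option (Set Op)) : Prop :=
  ∀ o, a = some o → ∃ o', b = some o' ∧ o ⊆ o'

lemma ojoin_mono {a a' b b' : Option (Set Op)} (ha : ole a a') (hb : ole b b') :
    ole (ojoin a b) (ojoin a' b') := by
  intro o ho
  cases a with
  | none =>
    cases b with
    | none => simp [ojoin] at ho
    | some y =>
      simp [ojoin] at ho; subst ho
      obtain ⟨y', hy', hyy⟩ := hb _ rfl
      cases a' with
      | none => exact ⟨y', by simp [ojoin, hy'], hyy⟩
      | some x' => exact ⟨x' ∪ y', by simp [ojoin, hy'], fun z hz => Or.inr (hyy hz)⟩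
  | some x =>
    obtain ⟨x', hx', hxx⟩ := ha _ rfl
    cases b with
    | none =>
      simp [ojoin] at ho; subst ho
      cases b' with
      | none => exact ⟨x', by simp [ojoin, hx'], hxx⟩
      | some y' => exact ⟨x' ∪ y', by simp [ojoin, hx'], fun z hz => Or.inl (hxx hz)⟩
    | some y =>
      simp [ojoin] at ho; subst ho
      obtain ⟨y', hy', hyy⟩ := hb _ rfl
      exact ⟨x' ∪ y', by simp [ojoin, hx', hy'],
        fun z hz => hz.elim (fun h => Or.inl (hxx h)) (fun h => Or.inr (hyy h))⟩

end IAnn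

/-- Monotonicity of the interrupt action: if `(o, ι) ⊑_{O×I} (o', ι')` then
`op ↓ (o, ι) ⊑_{O×I} op ↓ (o', ι')`. -/
theorem act_monotone (Op : Type) [DecidableEq Op]
    (op : Op) (p q : Set Op × IAnn Op) (h : IAnn.leOI p q) :
    IAnn.leOI (IAnn.act op p) (IAnn.act op q) := by
  obtain ⟨h1, h2⟩ := h
  unfold IAnn.act
  cases hp : p.2.val [op] with
  | none =>
    cases hq : q.2.val [op] with
    | none => exact ⟨h1, h2⟩
    | some o2 =>
      refine ⟨fun x hx => Or.inl (h1 hx), ?_⟩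
      intro l o ho
      match l with
      | [] => rw [p.2.nil_none] at ho; exact absurd ho (by simp)
      | a :: t =>
        by_cases hao : a = op
        · subst hao
          exfalso
          match t with
          | [] => rw [hp] at ho; exact absurd ho (by simp)
          | b :: u =>
            have hs : p.2.val (a :: b :: u) = some o := ho
            have := p.2.prefix_closed [a] (b :: u) (by simp) (by simp [hs])
            rw [hp] at this; simp at this
        · obtain ⟨o', ho', hoo⟩ := h2 _ _ ho
          have hu : (IAnn.update q.2 op).val (a :: t) = some o' := by
            simp [IAnn.update, hao, ho']
          show ∃ o'', IAnn.ojoin ((IAnn.update q.2 op).val (a :: t))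
              ((q.2.subtree op).val (a :: t)) = some o'' ∧ o ⊆ o''
          cases hs : (q.2.subtree op).val (a :: t) with
          | none => exact ⟨o', by simp [IAnn.ojoin, hu, hs], hoo⟩
          | some y =>
            exact ⟨o' ∪ y, by simp [IAnn.ojoin, hu, hs],
              fun z hz => Or.inl (hoo hz)⟩
  | some o1 =>
    obtain ⟨o2, hq, h12⟩ := h2 _ _ hp
    rw [hq]
    constructor
    · exact fun x hx => hx.elim (fun h => Or.inl (h1 h)) (fun h => Or.inr (h12 h))
    · intro l o ho
      match l with
      | [] => exact absurd ho (by simp [IAnn.join, IAnn.ojoin, IAnn.update, IAnn.subtree])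
      | a :: t =>
        have key : IAnn.ole ((IAnn.update p.2 op).val (a :: t)) ((IAnn.update q.2 op).val (a :: t)) := by
          intro x hx
          simp only [IAnn.update] at hx ⊢
          by_cases hao : a = op
          · simp [hao] at hx
          · rw [if_neg hao] at hx ⊢
            exact h2 _ _ hx
        have key2 : IAnn.ole ((p.2.subtree op).val (a :: t)) ((q.2.subtree op).val (a :: t)) := by
          intro x hx
          simp only [IAnn.subtree] at hx ⊢
          exact h2 _ _ hx
        exact IAnn.ojoin_mono key key2 _ ho
end

section
/- For every process type C and interrupt name op, C reduces to its interrupt action: C ⇝ op↓C, where op↓(X!!(o,ι)) := X!!(op↓(o,ι)) and op↓(C || D) := (op↓C) || (op↓D). -/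
/-- Process types `C, D ::= X!!(o,ι) | C || D`. -/
inductive PTy (V Op : Type) : Type where
  | run : V → Set Op → IAnn Op → PTy V Op
  | par : PTy V Op → PTy V Op → PTy V Op

namespace PTy

variable {V Op : Type} [DecidableEq Op]

/-- The interrupt action `op ↓ C` on process types. -/
def pact (op : Op) : PTy V Op → PTy V Op
  | run X o ι => run X (IAnn.act op (o, ι)).1 (IAnn.act op (o, ι)).2
  | par C D => par (pact op C) (pact op D)

/-- The signal annotations `signals-of(C)` of a process type. -/
def signalsOf : PTy V Op → Set Op
  | run _ o _ => o
  | par C D => signalsOf C ∪ signalsOf D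

/-- Process type reduction `C ⇝ D`. -/
inductive Red : PTy V Op → PTy V Op → Prop where
  | base (X : V) (o : Set Op) (ι : IAnn Op) : Red (run X o ι) (run X o ι)
  | act (X : V) (ops : List Op) (op : Op) (o : Set Op) (ι : IAnn Op) :
      Red (run X (IAnn.actList ops (o, ι)).1 (IAnn.actList ops (o, ι)).2)
          (run X (IAnn.actList ops (IAnn.act op (o, ι))).1
                 (IAnn.actList ops (IAnn.act op (o, ι))).2)
  | par {C C' D D' : PTy V Op} : Red C C' → Red D D' → Red (par C D) (par C' D')
  | spawnL (X : V) (o : Set Op) (ι : IAnn Op) (Y : V) (o' : Set Op) (ι' : IAnn Op) :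
      Red (run X o ι) (par (run X o ι) (run Y o' ι'))
  | spawnR (X : V) (o : Set Op) (ι : IAnn Op) (Y : V) (o' : Set Op) (ι' : IAnn Op) :
      Red (run Y o' ι') (par (run X o ι) (run Y o' ι'))

end PTy

/-- Every process type reduces to its interrupt action: `C ⇝ op ↓ C`. -/
theorem PTy_red_pact (V Op : Type) [DecidableEq Op] (C : PTy V Op) (op : Op) :
    PTy.Red C (PTy.pact op C) := by
  induction C with
  | run X o ι => exact PTy.Red.act X [] op o ι
  | par C D ihC ihD => exact PTy.Red.par ihC ihD
end

section
/- Process type reduction is preserved under interrupt actions: if C ⇝ D then op↓C ⇝ op↓D, for any interrupt name op. -/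
/-- Process type reduction is preserved under interrupt actions:
if `C ⇝ D` then `op ↓ C ⇝ op ↓ D`. -/
theorem PTy_red_pact_congr (V Op : Type) [DecidableEq Op]
    (op : Op) (C D : PTy V Op) (h : PTy.Red C D) :
    PTy.Red (PTy.pact op C) (PTy.pact op D) := by
  induction h with
  | base X o ι => exact PTy.Red.base X _ _
  | act X ops op' o ι => exact PTy.Red.act X (op :: ops) op' o ι
  | par _ _ ih1 ih2 => exact PTy.Red.par ih1 ih2
  | spawnL X o ι Y o' ι' => exact PTy.Red.spawnL X _ _ Y _ _
  | spawnR X o ι Y o' ι' => exact PTy.Red.spawnR X _ _ Y _ _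
end

section
/- Process type reduction does not erase signals: if C ⇝ D then signals-of(C) ⊑_O signals-of(D), where signals-of(X!!(o,ι)) = o and signals-of(C || D) = signals-of(C) ⊔ signals-of(D). -/
namespace IAnn
variable {Op : Type}

def T (ι ι' : IAnn Op) (Q : Set Op) : Prop :=
  ∀ l o x, ι.val l = some o → x ∈ o →
    x ∈ Q ∨ ∃ l' o', l' <:+ l ∧ ι'.val l' = some o' ∧ x ∈ o'

lemma ojoin_mem_left {a b : Option (Set Op)} {o : Set Op} {x : Op}
    (h : a = some o) (hx : x ∈ o) : ∃ c, ojoin a b = some c ∧ x ∈ c := by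
  subst h; cases b <;> exact ⟨_, rfl, by simp [hx]⟩

lemma ojoin_mem_right {a b : Option (Set Op)} {o : Set Op} {x : Op}
    (h : b = some o) (hx : x ∈ o) : ∃ c, ojoin a b = some c ∧ x ∈ c := by
  subst h; cases a <;> exact ⟨_, rfl, by simp [hx, ojoin]⟩

lemma mem_ojoin {a b : Option (Set Op)} {c : Set Op} {x : Op}
    (h : ojoin a b = some c) (hx : x ∈ c) :
    (∃ o, a = some o ∧ x ∈ o) ∨ (∃ o, b = some o ∧ x ∈ o) := by
  match a, b, h with
  | none, some y, h =>
    exact Or.inr ⟨y, rfl, (Option.some_inj.mp h) ▸ hx⟩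
  | some x', none, h =>
    exact Or.inl ⟨x', rfl, (Option.some_inj.mp h) ▸ hx⟩
  | some x', some y, h =>
    have hc : c = x' ∪ y := (Option.some_inj.mp h).symm
    rcases hc ▸ hx with h' | h'
    · exact Or.inl ⟨x', rfl, h'⟩
    · exact Or.inr ⟨y, rfl, h'⟩

lemma tail_suffix {b : Op} {t l : List Op} (h : (b :: t) <:+ l) : t <:+ l :=
  (List.suffix_cons b t).trans h

variable [DecidableEq Op]

lemma actTree_val (ι : IAnn Op) (a b : Op) (t : List Op) :
    (join (update ι a) (subtree ι a)).val (b::t)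
      = ojoin (if b = a then none else ι.val (b::t)) (ι.val (a::b::t)) := rfl

def Rel (p q : Set Op × IAnn Op) : Prop := p.1 ⊆ q.1 ∧ T p.2 q.2 q.1

lemma mem_actTree {ι : IAnn Op} {a : Op} {l : List Op} {o : Set Op} {x : Op}
    (h : (join (update ι a) (subtree ι a)).val l = some o) (hx : x ∈ o) :
    (∃ o₁, ι.val l = some o₁ ∧ x ∈ o₁) ∨ (∃ o₂, ι.val (a::l) = some o₂ ∧ x ∈ o₂) := by
  match l with
  | [] => rw [(join (update ι a) (subtree ι a)).nil_none] at h; exact absurd h (by simp)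
  | b :: t =>
    rw [actTree_val] at h
    rcases mem_ojoin h hx with ⟨o₁, h1, hx1⟩ | h2
    · split at h1
      · exact absurd h1 (by simp)
      · exact Or.inl ⟨o₁, h1, hx1⟩
    · exact Or.inr h2

lemma actTree_wit_update {ι' : IAnn Op} {a b : Op} {t : List Op} {o : Set Op} {x : Op}
    (hb : b ≠ a) (h : ι'.val (b::t) = some o) (hx : x ∈ o) :
    ∃ c, (join (update ι' a) (subtree ι' a)).val (b::t) = some c ∧ x ∈ c := by
  rw [actTree_val, if_neg hb]; exact ojoin_mem_left h hx

lemma actTree_wit_subtree {ι' : IAnn Op} {a : Op} {t : List Op} {o : Set Op} {x : Op}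
    (ht : t ≠ []) (h : ι'.val (a::t) = some o) (hx : x ∈ o) :
    ∃ c, (join (update ι' a) (subtree ι' a)).val t = some c ∧ x ∈ c := by
  match t with
  | [] => exact absurd rfl ht
  | b :: u => rw [actTree_val]; exact ojoin_mem_right h hx

lemma act_of_none {a : Op} {p : Set Op × IAnn Op} (h : p.2.val [a] = none) :
    act a p = p := by simp [act, h]

lemma act_of_some {a : Op} {p : Set Op × IAnn Op} {o : Set Op} (h : p.2.val [a] = some o) :
    act a p = (p.1 ∪ o, join (update p.2 a) (p.2.subtree a)) := by simp [act, h]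

/-- A witness at a suffix of `m`, where `m = l` or `m = a :: l`, transfers to the
fired tree at a suffix of `l` (or lands in the freshly-collected signals `oa'`). -/
lemma wit_transfer {ι' : IAnn Op} {a : Op} {l m l' : List Op} {o' oa' : Set Op} {x : Op}
    (hm : m = l ∨ m = a :: l) (hsuf : l' <:+ m)
    (hval : ι'.val l' = some o') (hxo' : x ∈ o') (hι' : ι'.val [a] = some oa') :
    x ∈ oa' ∨ ∃ l'' o'', l'' <:+ l ∧
      (join (update ι' a) (subtree ι' a)).val l'' = some o'' ∧ x ∈ o'' := by
  match l', hval with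
  | [], hval => rw [ι'.nil_none] at hval; exact absurd hval (by simp)
  | b :: t, hval =>
    by_cases hb : b = a
    · subst hb
      match t, hval with
      | [], hval =>
        rw [hι'] at hval
        exact Or.inl ((Option.some_inj.mp hval).symm ▸ hxo')
      | c :: u, hval =>
        obtain ⟨cc, hcc, hxcc⟩ := actTree_wit_subtree (by simp) hval hxo'
        have hsuf' : (c :: u) <:+ l := by
          rcases hm with rfl | rfl
          · exact tail_suffix hsuf
          · rcases List.suffix_cons_iff.mp hsuf with he | hs
            · exact (List.cons.injEq .. ▸ he).2 ▸ List.suffix_refl _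
            · exact tail_suffix hs
        exact Or.inr ⟨c :: u, cc, hsuf', hcc, hxcc⟩
    · obtain ⟨cc, hcc, hxcc⟩ := actTree_wit_update hb hval hxo'
      have hsuf' : (b :: t) <:+ l := by
        rcases hm with rfl | rfl
        · exact hsuf
        · rcases List.suffix_cons_iff.mp hsuf with he | hs
          · exact absurd (List.cons.injEq .. ▸ he).1 hb
          · exact hs
      exact Or.inr ⟨b :: t, cc, hsuf', hcc, hxcc⟩

lemma Rel_act (a : Op) {p q : Set Op × IAnn Op} (h : Rel p q) : Rel (act a p) (act a q) := by
  obtain ⟨hPQ, hT⟩ := h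
  rcases hι : p.2.val [a] with _ | oa
  · rw [act_of_none hι]
    rcases hι' : q.2.val [a] with _ | oa'
    · rw [act_of_none hι']; exact ⟨hPQ, hT⟩
    · rw [act_of_some hι']
      refine ⟨hPQ.trans Set.subset_union_left, ?_⟩
      intro l o x hl hx
      rcases hT l o x hl hx with hQ | ⟨l', o', hsuf, hval, hxo'⟩
      · exact Or.inl (Set.subset_union_left hQ)
      · rcases wit_transfer (Or.inl rfl) hsuf hval hxo' hι' with h | ⟨l'', o'', hs, hv, hx'⟩
        · exact Or.inl (Set.subset_union_right h)
        · exact Or.inr ⟨l'', o'', hs, hv, hx'⟩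
  · rw [act_of_some hι]
    have hoa : ∀ x ∈ oa, x ∈ q.1 ∨ ∃ o', q.2.val [a] = some o' ∧ x ∈ o' := by
      intro x hx
      rcases hT [a] oa x hι hx with hQ | ⟨l', o', hsuf, hval, hxo'⟩
      · exact Or.inl hQ
      · match l', hval with
        | [], hval => rw [q.2.nil_none] at hval; exact absurd hval (by simp)
        | b :: t, hval =>
          rcases List.suffix_cons_iff.mp hsuf with he | hs
          · obtain ⟨hb, ht⟩ := List.cons.injEq .. ▸ he
            subst hb; subst ht
            exact Or.inr ⟨o', hval, hxo'⟩
          · exact absurd (List.suffix_nil.mp hs) (by simp)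
    rcases hι' : q.2.val [a] with _ | oa'
    · rw [act_of_none hι']
      have hsub : oa ⊆ q.1 := by
        intro x hx
        rcases hoa x hx with h | ⟨o', hv, _⟩
        · exact h
        · rw [hι'] at hv; exact absurd hv (by simp)
      refine ⟨Set.union_subset hPQ hsub, ?_⟩
      intro l o x hl hx
      rcases mem_actTree hl hx with ⟨o₁, h1, hx1⟩ | ⟨o₂, h2, hx2⟩
      · exact hT l o₁ x h1 hx1
      · rcases hT (a::l) o₂ x h2 hx2 with hQ | ⟨l', o', hsuf, hval, hxo'⟩
        · exact Or.inl hQ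
        · rcases List.suffix_cons_iff.mp hsuf with he | hs
          · exfalso
            subst he
            have := q.2.prefix_closed [a] l (by simp) (by simp [hval])
            rw [hι'] at this; simp at this
          · exact Or.inr ⟨l', o', hs, hval, hxo'⟩
    · rw [act_of_some hι']
      have hQQ' : q.1 ⊆ q.1 ∪ oa' := Set.subset_union_left
      constructor
      · apply Set.union_subset (hPQ.trans hQQ')
        intro x hx
        rcases hoa x hx with h | ⟨o', hv, hxo'⟩
        · exact hQQ' h
        · rw [hι'] at hv
          exact Set.subset_union_right ((Option.some_inj.mp hv).symm ▸ hxo')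
      · intro l o x hl hx
        have step : ∀ m, (m = l ∨ m = a :: l) →
            ∀ o₂, p.2.val m = some o₂ → x ∈ o₂ →
            x ∈ q.1 ∪ oa' ∨ ∃ l'' o'', l'' <:+ l ∧
              (join (update q.2 a) (subtree q.2 a)).val l'' = some o'' ∧ x ∈ o'' := by
          intro m hm o₂ h2 hx2
          rcases hT m o₂ x h2 hx2 with hQ | ⟨l', o', hsuf, hval, hxo'⟩
          · exact Or.inl (Set.subset_union_left hQ)
          · rcases wit_transfer hm hsuf hval hxo' hι' with h | h
            · exact Or.inl (Set.subset_union_right h)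
            · exact Or.inr h
        rcases mem_actTree hl hx with ⟨o₁, h1, hx1⟩ | ⟨o₂, h2, hx2⟩
        · exact step l (Or.inl rfl) o₁ h1 hx1
        · exact step (a :: l) (Or.inr rfl) o₂ h2 hx2

lemma Rel_refl (p : Set Op × IAnn Op) : Rel p p :=
  ⟨subset_rfl, fun l o x hl hx => Or.inr ⟨l, o, List.suffix_refl l, hl, hx⟩⟩

lemma Rel_act_self (op : Op) (p : Set Op × IAnn Op) : Rel p (act op p) := by
  rcases hι : p.2.val [op] with _ | o1
  · rw [act_of_none hι]; exact Rel_refl p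
  · rw [act_of_some hι]
    refine ⟨Set.subset_union_left, ?_⟩
    intro l o x hl hx
    rcases wit_transfer (Or.inl rfl) (List.suffix_refl l) hl hx hι with h | h
    · exact Or.inl (Set.subset_union_right h)
    · exact Or.inr h

lemma Rel_actList (ops : List Op) {p q : Set Op × IAnn Op} (h : Rel p q) :
    Rel (actList ops p) (actList ops q) := by
  induction ops with
  | nil => exact h
  | cons a t ih => exact Rel_act a ih

lemma actList_fst_mono (ops : List Op) (op : Op) (p : Set Op × IAnn Op) :
    (actList ops p).1 ⊆ (actList ops (act op p)).1 :=
  (Rel_actList ops (Rel_act_self op p)).1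

end IAnn

/-- Process type reduction does not erase signals: if `C ⇝ D` then
`signals-of(C) ⊑_O signals-of(D)`. -/
theorem PTy_red_signals_le (V Op : Type) [DecidableEq Op]
    (C D : PTy V Op) (h : PTy.Red C D) :
    PTy.signalsOf C ⊆ PTy.signalsOf D := by
  induction h with
  | base X o ι => exact subset_rfl
  | act X ops op o ι =>
      exact IAnn.actList_fst_mono ops op (o, ι)
  | par _ _ ih1 ih2 => exact Set.union_subset_union ih1 ih2
  | spawnL X o ι Y o' ι' => exact Set.subset_union_left
  | spawnR X o ι Y o' ι' => exact Set.subset_union_right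
end

section
/- For any process type C and interrupt name op, signals-of(C) ⊑_O signals-of(op↓C): the interrupt action on process types does not erase already specified outgoing signals. -/
/-- The interrupt action on process types does not erase already specified
outgoing signals: `signals-of(C) ⊑_O signals-of(op ↓ C)`. -/
theorem PTy_pact_signals_le (V Op : Type) [DecidableEq Op]
    (C : PTy V Op) (op : Op) :
    PTy.signalsOf C ⊆ PTy.signalsOf (PTy.pact op C) := by
  induction C with
  | run X o ι =>
    simp only [PTy.pact, PTy.signalsOf, IAnn.act]
    cases h : ι.val [op] <;> simp [h]
  | par C D ihC ihD =>
    simp only [PTy.pact, PTy.signalsOf]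
    exact Set.union_subset_union ihC ihD
end
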